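/- In every regular execution, every process changes its color infinitely often. (Equivalently, there is no regular execution in which some process keeps its color forever.) -/

import Mathlib

namespace BFS

inductive Status : Type
  | Idle | Working | Power | WeakE | StrongE
deriving DecidableEq

open Status

inductive Rule (V : Type) : Type
  | RC1 | RC2 | RC3 | RC4 | RC5 | RC6
  | R1 | R2
  | R3 (v : V)
  | R4 | R5 | R6 | R7
deriving DecidableEq

structure ProcState (V : Type) where
  P : Option V
  TS : Option V
  C : Bool
  S : Status
  ph : Bool

abbrev Config (V : Type) := V → ProcState V

variable {V : Type} [Fintype V] [DecidableEq V]

/-- Erroneous statuses. -/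
def Erroneous (s : Status) : Prop := s = WeakE ∨ s = StrongE

/-- The children of `u`: neighbors whose parent pointer designates `u`. -/
def Child (G : SimpleGraph V) (c : Config V) (u : V) : Set V :=
  {v | G.Adj u v ∧ (c v).P = some u}

/-- Closed neighborhood `N[u]`. -/
def ClosedNbr (G : SimpleGraph V) (u : V) : Set V := insert u (G.neighborSet u)

def StrongConflict (G : SimpleGraph V) (c : Config V) (u : V) : Prop :=
  (c u).S ≠ StrongE ∧
    ∃ w ∈ ClosedNbr G u, ∃ v ∈ ClosedNbr G u,
      (c v).C ≠ (c u).C ∧ (c w).S = Power ∧ (c v).S = Power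

def Conflict (G : SimpleGraph V) (r : V) (c : Config V) (u : V) : Prop :=
  (u ≠ r ∧ (c u).P ≠ none ∧
      ∃ v ∈ G.neighborSet u, (c v).S = Power ∧ (c v).C ≠ (c u).C) ∨
  (u = r ∧ (c u).S ≠ StrongE ∧
      ∃ v ∈ G.neighborSet u, (c v).S = Power ∧
        ((c v).C ≠ (c u).C ∨ Child G c u = ∅))

def Detached (G : SimpleGraph V) (r : V) (c : Config V) (u : V) : Prop :=
  Child G c u = ∅ ∧ ((c u).P = none ∨ u = r) ∧ (c u).S ≠ Power

def StrongEReady (G : SimpleGraph V) (c : Config V) (u : V) : Prop :=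
  (c u).S = StrongE ∧ ∀ v ∈ G.neighborSet u, (c v).S ≠ Power

def PowerFaulty (G : SimpleGraph V) (c : Config V) (u : V) : Prop :=
  (c u).S = Power ∧ ∃ v ∈ G.neighborSet u, (c v).S = StrongE

def Faulty (G : SimpleGraph V) (r : V) (c : Config V) (u : V) : Prop :=
  u ≠ r ∧ ∃ p, (c u).P = some p ∧ ¬ Erroneous (c p).S ∧
    (Erroneous (c u).S ∨
     (c u).C ≠ (c p).C ∨
     ((c p).S ≠ Working ∧ (c u).S ≠ Idle) ∨
     ((c p).S = (c u).S ∧ (c u).ph ≠ (c p).ph) ∨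
     ((c u).S = Power ∧ (c u).ph ≠ (c p).ph) ∨
     ((c p).S = Power ∧ (Child G c u ≠ ∅ ∨ (c u).ph ≠ (c p).ph)))

def IllegalRoot (G : SimpleGraph V) (r : V) (c : Config V) (u : V) : Prop :=
  u ≠ r ∧ (c u).P = none ∧ ¬ Detached G r c u

def IllegalLiveRoot (G : SimpleGraph V) (r : V) (c : Config V) (u : V) : Prop :=
  IllegalRoot G r c u ∧ ¬ Erroneous (c u).S

def IllegalChild (r : V) (c : Config V) (u : V) : Prop :=
  u ≠ r ∧ ∃ p, (c u).P = some p ∧ Erroneous (c p).S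

def Isolated (G : SimpleGraph V) (c : Config V) (u : V) : Prop :=
  (c u).S = WeakE ∨ (c u).S = Working ∨ StrongEReady G c u

def Ok (G : SimpleGraph V) (r : V) (c : Config V) (u : V) : Prop :=
  ¬ StrongConflict G c u ∧ ¬ Conflict G r c u ∧ ¬ PowerFaulty G c u ∧
  ¬ Faulty G r c u ∧ ¬ IllegalRoot G r c u ∧ ¬ IllegalChild r c u

def QuietSubTree (G : SimpleGraph V) (c : Config V) (u : V) : Prop :=
  ∀ v ∈ Child G c u, (c v).S = Idle ∧ (c v).ph = (c u).ph

def EndFirstPhase (G : SimpleGraph V) (c : Config V) (u : V) : Prop :=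
  (c u).S = Power ∧ QuietSubTree G c u ∧ ∀ v ∈ G.neighborSet u, (c v).C = (c u).C

def EndPhase (G : SimpleGraph V) (c : Config V) (u : V) : Prop :=
  (c u).S = Working ∧ QuietSubTree G c u

def EndLastPhase (G : SimpleGraph V) (c : Config V) (u : V) : Prop :=
  Child G c u = ∅ ∧ (EndFirstPhase G c u ∨ EndPhase G c u)

def EndIntermediatePhase (G : SimpleGraph V) (c : Config V) (u : V) : Prop :=
  Child G c u ≠ ∅ ∧ (EndFirstPhase G c u ∨ EndPhase G c u)

def Connection (G : SimpleGraph V) (r : V) (c : Config V) (u v : V) : Prop :=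
  Detached G r c u ∧ (Isolated G c u ∨ (c u).S = Idle) ∧
  G.Adj u v ∧ (c v).C ≠ (c u).C ∧ (c v).S = Power

def NewPhase (G : SimpleGraph V) (c : Config V) (u : V) : Prop :=
  ∃ p, (c u).P = some p ∧ QuietSubTree G c u ∧ (c u).S = Idle ∧ (c u).ph ≠ (c p).ph

/-- Guards of the rules RC1–RC6, R1–R7 of the algorithm. -/
def Guard (G : SimpleGraph V) (r : V) : Rule V → Config V → V → Prop
  | .RC1, c, u => u = r ∧ ¬ Conflict G r c u ∧ PowerFaulty G c u ∧ QuietSubTree G c u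
  | .RC2, c, u => u = r ∧ Detached G r c u ∧ StrongEReady G c u
  | .RC3, c, u => u = r ∧ Conflict G r c u
  | .RC4, c, u => u ≠ r ∧ StrongConflict G c u
  | .RC5, c, u => u ≠ r ∧ ¬ StrongConflict G c u ∧
      (Conflict G r c u ∨ Faulty G r c u ∨ PowerFaulty G c u ∨
       IllegalLiveRoot G r c u ∨ IllegalChild r c u)
  | .RC6, c, u => u ≠ r ∧ Detached G r c u ∧ Isolated G c u ∧
      ∀ v ∈ G.neighborSet u, (c v).C = (c u).C ∨ (c v).S ≠ Power
  | .R1, c, u => u = r ∧ Ok G r c u ∧ EndLastPhase G c u ∧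
      ∀ v ∈ G.neighborSet u, (c v).S ≠ StrongE
  | .R2, c, u => u = r ∧ Ok G r c u ∧ EndIntermediatePhase G c u
  | .R3 v, c, u => u ≠ r ∧ Ok G r c u ∧ Connection G r c u v
  | .R4, c, u => u ≠ r ∧ Ok G r c u ∧ NewPhase G c u ∧ Child G c u ≠ ∅
  | .R5, c, u => u ≠ r ∧ Ok G r c u ∧ NewPhase G c u ∧ Child G c u = ∅ ∧
      ∀ v ∈ G.neighborSet u, (c v).S ≠ StrongE
  | .R6, c, u => u ≠ r ∧ Ok G r c u ∧ EndIntermediatePhase G c u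
  | .R7, c, u => u ≠ r ∧ Ok G r c u ∧ (c u).P ≠ none ∧ EndLastPhase G c u

/-- Phase of the parent of `u` (or `u`'s own phase if it has no parent). -/
def parentPh (c : Config V) (u : V) : Bool :=
  match (c u).P with
  | some p => (c p).ph
  | none => (c u).ph

/-- The action of each rule: the new local state of the executing process `u`. -/
def execRule (c : Config V) (u : V) : Rule V → ProcState V
  | .RC1 => { c u with S := Working }
  | .RC2 => { c u with S := Working }
  | .RC3 => { c u with S := StrongE }
  | .RC4 => { c u with S := StrongE, P := none }
  | .RC5 => { c u with S := WeakE, P := none }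
  | .RC6 => { c u with S := Idle }
  | .R1 => { c u with C := !(c u).C, S := Power }
  | .R2 => { c u with ph := !(c u).ph, S := Working }
  | .R3 v => { c u with C := (c v).C, ph := (c v).ph, S := Idle, P := some v, TS := some v }
  | .R4 => { c u with ph := parentPh c u, S := Working }
  | .R5 => { c u with ph := parentPh c u, S := Power }
  | .R6 => { c u with S := Idle }
  | .R7 => { c u with S := Idle, P := none }

/-- A computation step: a nonempty set of enabled processes each atomically
executes one enabled rule; all other processes keep their state. -/
def IsStep (G : SimpleGraph V) (r : V) (c1 : Config V)
    (act : V → Option (Rule V)) (c2 : Config V) : Prop :=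
  (∃ u ρ, act u = some ρ) ∧
  ∀ u, (act u = none → c2 u = c1 u) ∧
       ∀ ρ, act u = some ρ → Guard G r ρ c1 u ∧ c2 u = execRule c1 u ρ

def Step (G : SimpleGraph V) (r : V) (c1 c2 : Config V) : Prop :=
  ∃ act, IsStep G r c1 act c2

/-- A process is enabled if the guard of some rule holds at it. -/
def Enabled (G : SimpleGraph V) (r : V) (c : Config V) (u : V) : Prop :=
  ∃ ρ : Rule V, Guard G r ρ c u

/-- Well-formed configurations: pointers designate neighbors, and the root has
no parent and only uses the statuses Power, Working, StrongE. -/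
def WellFormed (G : SimpleGraph V) (r : V) (c : Config V) : Prop :=
  (∀ u v, (c u).P = some v → G.Adj u v) ∧
  (∀ u v, (c u).TS = some v → G.Adj u v) ∧
  (c r).P = none ∧ (c r).TS = none ∧
  ((c r).S = Power ∨ (c r).S = Working ∨ (c r).S = StrongE)

/-- `PowerParent u`: some descendant of `u` (possibly `u`) may take the `Power`
status by a series of R4/R5 moves. -/
inductive PowerParent (c : Config V) : V → Prop
  | base (u p : V) : (c u).P = some p → (c u).S = Idle → (c p).S = Working →
      (c u).ph ≠ (c p).ph → PowerParent c u
  | step (u p : V) : (c u).P = some p → PowerParent c p → (c u).S = Idle →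
      (c u).ph = (c p).ph → PowerParent c u

def Influential (c : Config V) (u : V) : Prop :=
  (c u).S = Power ∨ PowerParent c u

/-- `u` lies on a branch rooted at `r` all of whose members are non-faulty,
and the root is not StrongE. -/
inductive InLegalTree (G : SimpleGraph V) (r : V) (c : Config V) : V → Prop
  | root : (c r).S ≠ StrongE → InLegalTree G r c r
  | child (u p : V) : (c u).P = some p → InLegalTree G r c p →
      ¬ Faulty G r c u → InLegalTree G r c u

def InsideLegalTree (G : SimpleGraph V) (r : V) (c : Config V) (u : V) : Prop :=
  InLegalTree G r c u ∧ (c u).S ≠ Power ∧ Child G c u ≠ ∅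

def UnSafe (G : SimpleGraph V) (r : V) (c : Config V) (u : V) : Prop :=
  InsideLegalTree G r c u ∧
    ∃ v ∈ G.neighborSet u, (c v).C ≠ (c u).C ∧ Influential c v

def UnRegular (G : SimpleGraph V) (r : V) (c : Config V) (u : V) : Prop :=
  ¬ Detached G r c u ∧ ¬ InLegalTree G r c u

/-- Infinite executions of the algorithm (by Theorem `no deadlock` there is no
terminal configuration). -/
structure Execution (G : SimpleGraph V) (r : V) where
  conf : ℕ → Config V
  act : ℕ → V → Option (Rule V)
  valid : ∀ i, IsStep G r (conf i) (act i) (conf (i + 1))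

/-- The suffix of an execution starting at time `k`. -/
def Execution.shift {G : SimpleGraph V} {r : V} (e : Execution G r) (k : ℕ) :
    Execution G r where
  conf := fun i => e.conf (k + i)
  act := fun i => e.act (k + i)
  valid := fun i => e.valid (k + i)

/-- The first round of `e` is completed by time `t`: every process enabled in
the initial configuration has executed a rule or been neutralized before `t`. -/
def CompletesRound (G : SimpleGraph V) (r : V) (e : Execution G r) (t : ℕ) : Prop :=
  ∀ u, Enabled G r (e.conf 0) u →
    ∃ j, j < t ∧ (e.act j u ≠ none ∨ ¬ Enabled G r (e.conf (j + 1)) u)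

/-- `RoundsElapsed G r e k t`: at least `k` rounds of `e` are completed by time `t`. -/
def RoundsElapsed (G : SimpleGraph V) (r : V) (e : Execution G r) : ℕ → ℕ → Prop
  | 0, t => t = 0
  | k + 1, t => ∃ s, s ≤ t ∧ RoundsElapsed G r e k s ∧
      CompletesRound G r (e.shift s) (t - s)

/-- The tree-construction rules R1–R7. -/
def TreeRule : Rule V → Prop := fun ρ =>
  ρ = Rule.R1 ∨ ρ = Rule.R2 ∨ (∃ v, ρ = Rule.R3 v) ∨ ρ = Rule.R4 ∨
  ρ = Rule.R5 ∨ ρ = Rule.R6 ∨ ρ = Rule.R7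

noncomputable def FaultyCount (G : SimpleGraph V) (r : V) (c : Config V) : ℕ :=
  {u | Faulty G r c u}.ncard

/-- Inside-safe executions: insideLegalTree processes execute only R1–R7 and
the number of Faulty processes stays constant. -/
def InsideSafeExec (G : SimpleGraph V) (r : V) (e : Execution G r) : Prop :=
  (∀ i u ρ, InsideLegalTree G r (e.conf i) u → e.act i u = some ρ → TreeRule ρ) ∧
  (∀ i, FaultyCount G r (e.conf i) = FaultyCount G r (e.conf 0))

/-- Safe executions. -/
def SafeExec (G : SimpleGraph V) (r : V) (e : Execution G r) : Prop :=
  (∀ i u ρ, InsideLegalTree G r (e.conf i) u → e.act i u = some ρ → TreeRule ρ) ∧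
  (∀ i u, Influential (e.conf i) u → UnRegular G r (e.conf i) u → e.act i u = none) ∧
  (∀ i u, ¬ PowerFaulty G (e.conf i) u → ¬ PowerFaulty G (e.conf (i + 1)) u) ∧
  (∀ i u, e.act i u ≠ some Rule.RC1 ∧ e.act i u ≠ some Rule.RC4 ∧
      e.act i u ≠ some Rule.RC3 ∧ e.act i u ≠ some Rule.RC2)

/-- Pseudo-regular executions. -/
def PseudoRegularExec (G : SimpleGraph V) (r : V) (e : Execution G r) : Prop :=
  SafeExec G r e ∧
  (∀ i u ρ, InLegalTree G r (e.conf i) u → e.act i u = some ρ → TreeRule ρ) ∧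
  (∀ i u, ¬ UnRegular G r (e.conf i) u → ¬ UnRegular G r (e.conf (i + 1)) u)

/-- Regular executions: pseudo-regular and all processes execute only R1–R7. -/
def RegularExec (G : SimpleGraph V) (r : V) (e : Execution G r) : Prop :=
  PseudoRegularExec G r e ∧ (∀ i u ρ, e.act i u = some ρ → TreeRule ρ)

/-- `u` executes rules infinitely often along `e`. -/
def ActsInfOften {G : SimpleGraph V} {r : V} (e : Execution G r) (u : V) : Prop :=
  ∀ k, ∃ i, k ≤ i ∧ e.act i u ≠ none

def A1 (G : SimpleGraph V) (r : V) (c : Config V) : Prop :=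
  ∀ u, ¬ Faulty G r c u ∧ ¬ IllegalLiveRoot G r c u

def A2 (G : SimpleGraph V) (r : V) (c : Config V) : Prop :=
  A1 G r c ∧ ∀ u, ¬ UnSafe G r c u

def A3 (G : SimpleGraph V) (r : V) (c : Config V) : Prop :=
  A2 G r c ∧ ∀ u, ¬ Influential c u ∨ InLegalTree G r c u

def A4 (G : SimpleGraph V) (r : V) (c : Config V) : Prop :=
  A3 G r c ∧ ∀ u, (c u).S ≠ StrongE

def PIC (r : V) (c : Config V) (u : V) : Prop :=
  Influential c u ∧ (c u).C ≠ (c r).C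

def PICPowerParent (r : V) (c : Config V) (u : V) : Prop :=
  PIC r c u ∧ PowerParent c u


/-!
Suppose some process keeps its color forever. A process cannot change its color twice unless,
in between, all its neighbors agree with its color; hence a stable color propagates along edges
and, the graph being connected, all colors eventually stabilize. Then the color-changing rules
R1 and R3 stop, R7 fires at most once more per process, and from some time on only R2, R4, R5, R6
are executed, with parent pointers frozen. A process executing R5 is then stuck, so a process
acting forever has a child acting forever; following such children yields a cycle path of
processes acting forever, avoiding the root, whose statuses are eventually `Idle` or `Working`.
Between two consecutive actions of a process of the cycle, its child (after R4) or its parent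
(after R6) acts twice: an impossible infinite descent.
-/

open Filter

theorem exists_crossing {p : ℕ → Prop} {i j : ℕ} (hij : i ≤ j) (hi : p i) (hj : ¬ p j) :
    ∃ t, i ≤ t ∧ t < j ∧ p t ∧ ¬ p (t + 1) := by
  induction j, hij using Nat.le_induction with
  | base => exact absurd hi hj
  | succ n hin ih =>
    by_cases hn : p n
    · exact ⟨n, hin, n.lt_succ_self, hn, hj⟩
    · obtain ⟨t, hit, htn, ht, ht'⟩ := ih hn
      exact ⟨t, hit, by omega, ht, ht'⟩

theorem eq_of_forall_succ_eq {α : Sort*} {g : ℕ → α} {i j : ℕ} (hij : i ≤ j)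
    (h : ∀ t, i ≤ t → t < j → g (t + 1) = g t) : g j = g i := by
  by_contra hne
  obtain ⟨t, hit, htj, ht, ht'⟩ := exists_crossing (p := fun t => g t = g i) hij rfl hne
  exact ht' ((h t hit htj).trans ht)

theorem exists_succ_ne_of_ne {α : Sort*} {g : ℕ → α} {i j : ℕ} (hij : i ≤ j)
    (h : g j ≠ g i) :
    ∃ t, i ≤ t ∧ t < j ∧ g (t + 1) ≠ g t := by
  by_contra! hc
  exact h (eq_of_forall_succ_eq hij hc)

theorem exists_first_after {p : ℕ → Prop} {t i : ℕ} (hti : t < i) (hi : p i) :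
    ∃ t', t < t' ∧ t' ≤ i ∧ p t' ∧ ∀ s, t < s → s < t' → ¬ p s := by
  classical
  have hex : ∃ t', t < t' ∧ p t' := ⟨i, hti, hi⟩
  exact ⟨Nat.find hex, (Nat.find_spec hex).1, Nat.find_min' hex ⟨hti, hi⟩,
    (Nat.find_spec hex).2, fun s hts hs hps => Nat.find_min hex hs ⟨hts, hps⟩⟩

section Steps

variable {V : Type} {G : SimpleGraph V} {r : V} {e : Execution G r} {i j : ℕ} {u : V}
  {ρ : Rule V}

theorem Execution.conf_succ_of_act_eq_none (h : e.act i u = none) :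
    e.conf (i + 1) u = e.conf i u :=
  ((e.valid i).2 u).1 h

theorem Execution.guard_of_act_eq_some (h : e.act i u = some ρ) :
    Guard G r ρ (e.conf i) u :=
  (((e.valid i).2 u).2 ρ h).1

theorem Execution.conf_succ_of_act_eq_some (h : e.act i u = some ρ) :
    e.conf (i + 1) u = execRule (e.conf i) u ρ :=
  (((e.valid i).2 u).2 ρ h).2

theorem Execution.exists_act_of_succ_ne {β : Sort*} (g : ProcState V → β)
    (h : g (e.conf (i + 1) u) ≠ g (e.conf i u)) :
    ∃ ρ, e.act i u = some ρ ∧ Guard G r ρ (e.conf i) u ∧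
      g (execRule (e.conf i) u ρ) ≠ g (e.conf i u) := by
  cases hact : e.act i u with
  | none => exact absurd (by rw [e.conf_succ_of_act_eq_none hact]) h
  | some ρ =>
    exact ⟨ρ, rfl, e.guard_of_act_eq_some hact, e.conf_succ_of_act_eq_some hact ▸ h⟩

theorem Execution.conf_eq_of_act_eq_none (hij : i ≤ j)
    (h : ∀ t, i ≤ t → t < j → e.act t u = none) : e.conf j u = e.conf i u :=
  eq_of_forall_succ_eq (g := fun t => e.conf t u) hij
    fun t hit htj => e.conf_succ_of_act_eq_none (h t hit htj)

theorem Execution.forall_gt_of_act_ne_none {Q : ProcState V → Prop} {t : ℕ}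
    (hQ : ∀ i ρ, e.act i u = some ρ → Q (e.conf (i + 1) u)) (ht : e.act t u ≠ none) :
    ∀ j, t < j → Q (e.conf j u) := by
  intro j hj
  induction j, hj using Nat.le_induction with
  | base =>
    obtain ⟨ρ, hρ⟩ := Option.ne_none_iff_exists'.1 ht
    exact hQ t ρ hρ
  | succ n hn ih =>
    cases hact : e.act n u with
    | none => rwa [e.conf_succ_of_act_eq_none hact]
    | some ρ => exact hQ n ρ hact

theorem Execution.exists_act_of_conf_ne (hij : i ≤ j) (h : e.conf j u ≠ e.conf i u) :
    ∃ t, i ≤ t ∧ t < j ∧ e.act t u ≠ none := by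
  by_contra! hnone
  exact h (e.conf_eq_of_act_eq_none hij hnone)

theorem ActsInfOften.exists_next_act (hu : ActsInfOften e u) (t : ℕ) :
    ∃ t', t < t' ∧ e.act t' u ≠ none ∧ e.conf t' u = e.conf (t + 1) u := by
  obtain ⟨i, hti, hi⟩ := hu (t + 1)
  obtain ⟨t', htt', -, ht', hmid⟩ :=
    exists_first_after (p := fun j => e.act j u ≠ none) (show t < i by omega) hi
  exact ⟨t', htt', ht', e.conf_eq_of_act_eq_none htt' fun s h1 h2 => not_not.1 (hmid s h1 h2)⟩

end Steps

section Rules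

variable {V : Type} {G : SimpleGraph V} {r : V} {c : Config V} {u : V} {ρ : Rule V}

theorem execRule_C_ne_iff (hg : Guard G r ρ c u) :
    (execRule c u ρ).C ≠ (c u).C ↔ ρ = .R1 ∨ ∃ w, ρ = .R3 w := by
  cases ρ <;> simp [execRule]
  exact hg.2.2.2.2.2.1

theorem execRule_P_of_treeRule (hρ : TreeRule ρ) :
    (execRule c u ρ).P = (c u).P ∨ (∃ w, ρ = .R3 w ∧ (execRule c u ρ).P = some w) ∨
      (ρ = .R7 ∧ (execRule c u ρ).P = none) := by
  rcases hρ with rfl | rfl | ⟨w, rfl⟩ | rfl | rfl | rfl | rfl <;> simp [execRule]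

end Rules

section Color

variable {V : Type} {G : SimpleGraph V} {r : V}

def NbrsSameColor (G : SimpleGraph V) (c : Config V) (u : V) : Prop :=
  ∀ v ∈ G.neighborSet u, (c v).C = (c u).C

def OnlyTreeRules (e : Execution G r) : Prop :=
  ∀ i u ρ, e.act i u = some ρ → TreeRule ρ

theorem nbrsSameColor_of_power {c : Config V} {u : V} (hS : (c u).S = Power)
    (h : EndFirstPhase G c u ∨ EndPhase G c u) : NbrsSameColor G c u := by
  rcases h with hEFP | hEP
  · exact hEFP.2.2
  · exact absurd (hEP.1.symm.trans hS) (by decide)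

theorem nbrsSameColor_of_leave_power {c : Config V} {u : V} {ρ : Rule V} (hρ : TreeRule ρ)
    (hg : Guard G r ρ c u) (hS : (c u).S = Power) (hS' : (execRule c u ρ).S ≠ Power)
    (hC : (execRule c u ρ).C = (c u).C) : NbrsSameColor G c u := by
  rcases hρ with rfl | rfl | ⟨w, rfl⟩ | rfl | rfl | rfl | rfl
  · simp [execRule] at hC
  · exact nbrsSameColor_of_power hS hg.2.2.2
  · exact absurd hC ((execRule_C_ne_iff hg).2 (Or.inr ⟨w, rfl⟩))
  · obtain ⟨p, -, -, hIdle, -⟩ := hg.2.2.1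
    exact absurd (hIdle.symm.trans hS) (by decide)
  · obtain ⟨p, -, -, hIdle, -⟩ := hg.2.2.1
    exact absurd (hIdle.symm.trans hS) (by decide)
  · exact nbrsSameColor_of_power hS hg.2.2.2
  · exact nbrsSameColor_of_power hS hg.2.2.2.2

theorem eq_R4_of_execRule_S_eq_working {c : Config V} {u : V} {ρ : Rule V} (hρ : TreeRule ρ)
    (hg : Guard G r ρ c u) (hu : u ≠ r) (hS : (execRule c u ρ).S = Working) : ρ = .R4 := by
  rcases hρ with rfl | rfl | ⟨w, rfl⟩ | rfl | rfl | rfl | rfl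
  · exact absurd hg.1 hu
  · exact absurd hg.1 hu
  all_goals first | rfl | simp [execRule] at hS

variable {e : Execution G r} {i j : ℕ} {u v : V} {ρ : Rule V}

theorem Execution.C_succ_ne_of_act (h : e.act i u = some ρ)
    (hρ : ρ = .R1 ∨ ∃ w, ρ = .R3 w) :
    (e.conf (i + 1) u).C ≠ (e.conf i u).C := by
  rw [e.conf_succ_of_act_eq_some h]
  exact (execRule_C_ne_iff (e.guard_of_act_eq_some h)).2 hρ

theorem exists_nbrsSameColor_of_leave_power (hT : OnlyTreeRules e) (hij : i ≤ j)
    (hi : (e.conf i v).S = Power) (hj : (e.conf j v).S ≠ Power)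
    (hC : ∀ s, i ≤ s → s < j → (e.conf (s + 1) v).C = (e.conf s v).C) :
    ∃ s, i ≤ s ∧ s < j ∧ NbrsSameColor G (e.conf s) v := by
  obtain ⟨s, his, hsj, hs, hs'⟩ :=
    exists_crossing (p := fun s => (e.conf s v).S = Power) hij hi hj
  obtain ⟨ρ, hact, hg, -⟩ := e.exists_act_of_succ_ne (fun x => x.S) (i := s) (u := v)
    (by rw [hs]; exact hs')
  have hstep := e.conf_succ_of_act_eq_some hact
  refine ⟨s, his, hsj, nbrsSameColor_of_leave_power (hT s v ρ hact) hg hs ?_ ?_⟩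
  · rwa [← hstep]
  · rw [← hstep]
    exact hC s his hsj

theorem exists_act_R7 (hT : OnlyTreeRules e) (hij : i ≤ j) (hi : (e.conf i v).P ≠ none)
    (hj : (e.conf j v).P = none) : ∃ s, i ≤ s ∧ s < j ∧ e.act s v = some .R7 := by
  obtain ⟨s, his, hsj, hs, hs'⟩ :=
    exists_crossing (p := fun s => (e.conf s v).P ≠ none) hij hi (not_not.2 hj)
  rw [not_not] at hs'
  obtain ⟨ρ, hact, -, hne⟩ := e.exists_act_of_succ_ne (fun x => x.P) (i := s) (u := v)
    (by rw [hs']; exact hs.symm)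
  rw [e.conf_succ_of_act_eq_some hact] at hs'
  rcases execRule_P_of_treeRule (hT s v ρ hact) with h | ⟨w, -, h⟩ | ⟨rfl, -⟩
  · exact absurd h hne
  · simp [h] at hs'
  · exact ⟨s, his, hsj, hact⟩

theorem exists_act_R4 (hT : OnlyTreeRules e) (hv : v ≠ r) (hij : i ≤ j)
    (hi : (e.conf i v).S ≠ Working) (hj : (e.conf j v).S = Working) :
    ∃ s, i ≤ s ∧ s < j ∧ e.act s v = some .R4 := by
  obtain ⟨s, his, hsj, hs, hs'⟩ :=
    exists_crossing (p := fun s => (e.conf s v).S ≠ Working) hij hi (not_not.2 hj)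
  rw [not_not] at hs'
  obtain ⟨ρ, hact, hg, -⟩ := e.exists_act_of_succ_ne (fun x => x.S) (i := s) (u := v)
    (by rw [hs']; exact Ne.symm hs)
  rw [e.conf_succ_of_act_eq_some hact] at hs'
  obtain rfl := eq_R4_of_execRule_S_eq_working (hT s v ρ hact) hg hv hs'
  exact ⟨s, his, hsj, hact⟩

theorem exists_power_of_mem_child (hT : OnlyTreeRules e) {x : V} (hij : i ≤ j)
    (hi : Child G (e.conf i) v = ∅) (hj : x ∈ Child G (e.conf j) v) :
    ∃ s, i ≤ s ∧ s < j ∧ (e.conf s v).S = Power := by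
  have hxi : (e.conf i x).P ≠ some v := fun h =>
    (Set.eq_empty_iff_forall_notMem.1 hi) x ⟨hj.1, h⟩
  obtain ⟨s, his, hsj, hs, hs'⟩ :=
    exists_crossing (p := fun s => (e.conf s x).P ≠ some v) hij hxi (not_not.2 hj.2)
  rw [not_not] at hs'
  obtain ⟨ρ, hact, hg, hne⟩ := e.exists_act_of_succ_ne (fun x => x.P) (i := s) (u := x)
    (by rw [hs']; exact Ne.symm hs)
  rw [e.conf_succ_of_act_eq_some hact] at hs'
  rcases execRule_P_of_treeRule (hT s x ρ hact) with h | ⟨w, rfl, h⟩ | ⟨-, h⟩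
  · exact absurd h hne
  · obtain rfl : w = v := Option.some.inj (h.symm.trans hs')
    exact ⟨s, his, hsj, hg.2.2.2.2.2.2⟩
  · simp [h] at hs'

theorem exists_nbrsSameColor_root (hT : OnlyTreeRules e) {t t' : ℕ} (htt' : t < t')
    (ht : e.act t r = some .R1) (ht' : e.act t' r = some .R1)
    (hC : ∀ s, t < s → s < t' → (e.conf (s + 1) r).C = (e.conf s r).C) :
    ∃ s, t < s ∧ s ≤ t' ∧ NbrsSameColor G (e.conf s) r := by
  obtain ⟨-, -, ⟨-, hend⟩, -⟩ := e.guard_of_act_eq_some ht'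
  rcases hend with hEFP | hEP
  · exact ⟨t', htt', le_rfl, hEFP.2.2⟩
  have hpow : (e.conf (t + 1) r).S = Power := by
    rw [e.conf_succ_of_act_eq_some ht]
    rfl
  obtain ⟨s, hts, hst', hs⟩ := exists_nbrsSameColor_of_leave_power hT
    (show t + 1 ≤ t' by omega) hpow (by rw [hEP.1]; decide) hC
  exact ⟨s, hts, hst'.le, hs⟩

theorem exists_nbrsSameColor_nonroot (hT : OnlyTreeRules e) (hv : v ≠ r) {t t' : ℕ} {w w' : V}
    (htt' : t < t') (ht : e.act t v = some (.R3 w)) (ht' : e.act t' v = some (.R3 w'))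
    (hC : ∀ s, t < s → s < t' → (e.conf (s + 1) v).C = (e.conf s v).C) :
    ∃ s, t < s ∧ s ≤ t' ∧ NbrsSameColor G (e.conf s) v := by
  obtain ⟨-, -, hdet, -⟩ := e.guard_of_act_eq_some ht
  obtain ⟨-, -, hdet', -⟩ := e.guard_of_act_eq_some ht'
  have hstep := e.conf_succ_of_act_eq_some ht
  obtain ⟨s₀, hts₀, hs₀t', h7⟩ := exists_act_R7 hT (show t + 1 ≤ t' by omega)
    (by rw [hstep]; simp [execRule]) (hdet'.2.1.resolve_right hv)
  obtain ⟨-, -, -, -, hend⟩ := e.guard_of_act_eq_some h7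
  rcases hend with hEFP | hEP
  · exact ⟨s₀, by omega, hs₀t'.le, hEFP.2.2⟩
  -- `v` had a child when it executed R4, hence had been `Power` to accept it
  obtain ⟨s₁, hts₁, hs₁s₀, h4⟩ := exists_act_R4 hT hv (show t + 1 ≤ s₀ by omega)
    (by rw [hstep]; simp [execRule]) hEP.1
  obtain ⟨x, hx⟩ := Set.nonempty_iff_ne_empty.2 (e.guard_of_act_eq_some h4).2.2.2
  obtain ⟨q, htq, hqs₁, hq⟩ :=
    exists_power_of_mem_child hT (show t ≤ s₁ by omega) hdet.1 hx
  have htq' : t < q := lt_of_le_of_ne htq (by rintro rfl; exact hdet.2.2 hq)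
  obtain ⟨s, hqs, hst', hs⟩ := exists_nbrsSameColor_of_leave_power hT (show q ≤ t' by omega)
    hq hdet'.2.2 (fun s h1 h2 => hC s (by omega) h2)
  exact ⟨s, by omega, hst'.le, hs⟩

theorem exists_nbrsSameColor_between_C_changes (hT : OnlyTreeRules e) {t t' : ℕ} (htt' : t < t')
    (ht : (e.conf (t + 1) v).C ≠ (e.conf t v).C) (ht' : (e.conf (t' + 1) v).C ≠ (e.conf t' v).C)
    (hC : ∀ s, t < s → s < t' → (e.conf (s + 1) v).C = (e.conf s v).C) :
    ∃ s, t < s ∧ s ≤ t' ∧ NbrsSameColor G (e.conf s) v := by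
  obtain ⟨ρ, hact, hg, hρ⟩ := e.exists_act_of_succ_ne (fun x => x.C) ht
  obtain ⟨ρ', hact', hg', hρ'⟩ := e.exists_act_of_succ_ne (fun x => x.C) ht'
  rcases (execRule_C_ne_iff hg).1 hρ with rfl | ⟨w, rfl⟩ <;>
    rcases (execRule_C_ne_iff hg').1 hρ' with rfl | ⟨w', rfl⟩
  · obtain rfl : v = r := hg.1
    exact exists_nbrsSameColor_root hT htt' hact hact' hC
  · exact absurd hg.1 hg'.1
  · exact absurd hg'.1 hg.1
  · exact exists_nbrsSameColor_nonroot hT hg.1 htt' hact hact' hC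

theorem eventually_C_succ_eq_of_adj (hT : OnlyTreeRules e) (huv : G.Adj u v)
    (hu : ∀ᶠ i in atTop, (e.conf (i + 1) u).C = (e.conf i u).C) :
    ∀ᶠ i in atTop, (e.conf (i + 1) v).C = (e.conf i v).C := by
  obtain ⟨M, hM⟩ := eventually_atTop.1 hu
  have hγ : ∀ i, M ≤ i → (e.conf i u).C = (e.conf M u).C := fun i hi =>
    eq_of_forall_succ_eq (g := fun t => (e.conf t u).C) hi fun t ht _ => hM t ht
  by_contra hv
  have hchg := frequently_atTop.1 (not_eventually.1 hv)
  have hnext : ∀ t, M ≤ t → (e.conf (t + 1) v).C ≠ (e.conf t v).C →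
      ∃ t', t < t' ∧ (e.conf (t' + 1) v).C ≠ (e.conf t' v).C ∧
        ∀ s, t < s → s ≤ t' → (e.conf s v).C = (e.conf M u).C := by
    intro t hMt ht
    obtain ⟨i, hti, hi⟩ := hchg (t + 1)
    obtain ⟨t', htt', -, ht', hmid⟩ := exists_first_after
      (p := fun s => (e.conf (s + 1) v).C ≠ (e.conf s v).C) (show t < i by omega) hi
    replace hmid : ∀ s, t < s → s < t' → (e.conf (s + 1) v).C = (e.conf s v).C :=
      fun s h1 h2 => not_not.1 (hmid s h1 h2)
    obtain ⟨s₀, hts₀, hs₀t', hs₀⟩ :=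
      exists_nbrsSameColor_between_C_changes hT htt' ht ht' hmid
    refine ⟨t', htt', ht', fun s hts hst' => ?_⟩
    have hconst : ∀ s', t < s' → s' ≤ t' → (e.conf s' v).C = (e.conf (t + 1) v).C :=
      fun s' h1 h2 => eq_of_forall_succ_eq (g := fun t => (e.conf t v).C) h1
        fun s'' h1' h2' => hmid s'' (by omega) (by omega)
    rw [hconst s hts hst', ← hconst s₀ hts₀ hs₀t', ← hs₀ u huv.symm,
      hγ s₀ (by omega)]
  -- at two consecutive color changes, `v` would switch both times to the stable color of `u`
  obtain ⟨t₁, hMt₁, ht₁⟩ := hchg M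
  obtain ⟨t₂, ht₁₂, ht₂, hc₂⟩ := hnext t₁ hMt₁ ht₁
  obtain ⟨t₃, ht₂₃, -, hc₃⟩ := hnext t₂ (by omega) ht₂
  exact ht₂ ((hc₃ (t₂ + 1) (by omega) ht₂₃).trans (hc₂ t₂ ht₁₂ le_rfl).symm)

theorem eventually_C_succ_eq_of_connected (hT : OnlyTreeRules e) (hconn : G.Connected)
    (hu : ∀ᶠ i in atTop, (e.conf (i + 1) u).C = (e.conf i u).C) (w : V) :
    ∀ᶠ i in atTop, (e.conf (i + 1) w).C = (e.conf i w).C := by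
  induction (SimpleGraph.reachable_iff_reflTransGen u w).1 (hconn.preconnected u w) with
  | refl => exact hu
  | tail _ hab ih => exact eventually_C_succ_eq_of_adj hT hab ih

end Color

section Stabilization

variable {V : Type} {G : SimpleGraph V} {r : V}

def PhaseRule (ρ : Rule V) : Prop :=
  ρ = .R2 ∨ ρ = .R4 ∨ ρ = .R5 ∨ ρ = .R6

def OnlyPhaseRules (e : Execution G r) : Prop :=
  ∀ i u ρ, e.act i u = some ρ → PhaseRule ρ

variable {e : Execution G r} {u : V}

theorem eventually_act_ne_R7 (hT : OnlyTreeRules e)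
    (hC : ∀ᶠ i in atTop, (e.conf (i + 1) u).C = (e.conf i u).C) :
    ∀ᶠ i in atTop, e.act i u ≠ some .R7 := by
  obtain ⟨N, hN⟩ := eventually_atTop.1 hC
  by_cases h7 : ∃ s, N ≤ s ∧ e.act s u = some .R7
  swap
  · exact eventually_atTop.2 ⟨N, fun i hi h => h7 ⟨i, hi, h⟩⟩
  obtain ⟨s, hNs, hs⟩ := h7
  -- once detached after `N`, a process can no longer join a tree (R3 changes colors)
  have hP : ∀ j, s < j → (e.conf j u).P = none := by
    intro j hj
    induction j, hj using Nat.le_induction with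
    | base => rw [e.conf_succ_of_act_eq_some hs]; rfl
    | succ n hn ih =>
      cases hact : e.act n u with
      | none => rwa [e.conf_succ_of_act_eq_none hact]
      | some ρ =>
        rw [e.conf_succ_of_act_eq_some hact]
        rcases execRule_P_of_treeRule (c := e.conf n) (u := u) (hT n u ρ hact)
          with h | ⟨w, rfl, -⟩ | ⟨-, h⟩
        · rwa [h]
        · exact absurd (hN n (by omega)) (e.C_succ_ne_of_act hact (Or.inr ⟨w, rfl⟩))
        · exact h
  exact eventually_atTop.2 ⟨s + 1, fun i hi h7 =>
    (e.guard_of_act_eq_some h7).2.2.1 (hP i (by omega))⟩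

theorem exists_onlyPhaseRules_shift [Finite V] (hT : OnlyTreeRules e)
    (hC : ∀ᶠ i in atTop, ∀ u, (e.conf (i + 1) u).C = (e.conf i u).C) :
    ∃ N, OnlyPhaseRules (e.shift N) := by
  have h7 := eventually_all.2 fun u => eventually_act_ne_R7 hT (hC.mono fun i h => h u)
  obtain ⟨N, hN⟩ := eventually_atTop.1 (hC.and h7)
  refine ⟨N, fun i u ρ hact => ?_⟩
  obtain ⟨hCi, h7i⟩ := hN (N + i) (by omega)
  have hC' := fun hρ => e.C_succ_ne_of_act hact hρ (hCi u)
  rcases hT (N + i) u ρ hact with rfl | rfl | ⟨w, rfl⟩ | rfl | rfl | rfl | rfl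
  · exact absurd (Or.inl rfl) hC'
  · exact Or.inl rfl
  · exact absurd (Or.inr ⟨w, rfl⟩) hC'
  · exact Or.inr (Or.inl rfl)
  · exact Or.inr (Or.inr (Or.inl rfl))
  · exact Or.inr (Or.inr (Or.inr rfl))
  · exact absurd hact (h7i u)

end Stabilization

theorem _root_.Function.exists_mem_periodicPts {α : Type*} [Finite α] [Nonempty α]
    (f : α → α) : ∃ x, x ∈ Function.periodicPts f := by
  obtain ⟨m, n, hmn, heq⟩ :=
    Finite.exists_ne_map_eq_of_infinite fun n : ℕ => f^[n] (Classical.arbitrary α)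
  wlog h : m < n generalizing m n
  · exact this n m hmn.symm heq.symm (by omega)
  refine ⟨f^[m] (Classical.arbitrary α),
    Function.mk_mem_periodicPts (n := n - m) (by omega) ?_⟩
  change f^[n - m] (f^[m] _) = _
  rw [← Function.iterate_add_apply, Nat.sub_add_cancel h.le]
  exact heq.symm

section Phases

variable {V : Type} {G : SimpleGraph V} {r : V} {c : Config V} {e : Execution G r}
  {i j : ℕ} {u v x : V} {ρ : Rule V}

theorem status_of_end (h : EndFirstPhase G c u ∨ EndPhase G c u) :
    (c u).S = Power ∨ (c u).S = Working :=
  h.imp (·.1) (·.1)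

theorem working_and_ph_eq_of_not_faulty {p : V} (hnf : ¬ Faulty G r c v) (hv : v ≠ r)
    (hP : (c v).P = some p) (hp : (c p).S = Idle ∨ (c p).S = Working)
    (hS : (c v).S = Working) : (c p).S = Working ∧ (c v).ph = (c p).ph := by
  have hpe : ¬ Erroneous (c p).S := by
    rcases hp with h | h <;> simp [Erroneous, h]
  have hpw : (c p).S = Working := by
    by_contra h
    exact hnf ⟨hv, p, hP, hpe, Or.inr (Or.inr (Or.inl ⟨h, by simp [hS]⟩))⟩
  refine ⟨hpw, by_contra fun h => hnf ⟨hv, p, hP, hpe, Or.inr (Or.inr (Or.inr (Or.inl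
    ⟨hpw.trans hS.symm, h⟩)))⟩⟩

theorem Execution.ph_succ_ne_of_act_R4 (h : e.act i u = some .R4) :
    (e.conf (i + 1) u).ph ≠ (e.conf i u).ph := by
  obtain ⟨-, -, ⟨p, hp, -, -, hne⟩, -⟩ := e.guard_of_act_eq_some h
  rw [e.conf_succ_of_act_eq_some h]
  simpa [execRule, parentPh, hp] using hne.symm

theorem Execution.ph_succ_ne_of_act_R2 (h : e.act i u = some .R2) :
    (e.conf (i + 1) u).ph ≠ (e.conf i u).ph := by
  rw [e.conf_succ_of_act_eq_some h]
  simp [execRule]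

variable (hph : OnlyPhaseRules e)
include hph

theorem P_eq_initial (i : ℕ) (u : V) : (e.conf i u).P = (e.conf 0 u).P := by
  induction i with
  | zero => rfl
  | succ i ih =>
    rw [← ih]
    cases hact : e.act i u with
    | none => rw [e.conf_succ_of_act_eq_none hact]
    | some ρ =>
      rw [e.conf_succ_of_act_eq_some hact]
      rcases hph i u ρ hact with rfl | rfl | rfl | rfl <;> rfl

theorem child_eq_initial (i : ℕ) (u : V) : Child G (e.conf i) u = Child G (e.conf 0) u := by
  ext x
  simp only [Child, Set.mem_ofPred_eq, P_eq_initial hph i x]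

theorem act_eq_R4_or_R5_or_R6 (hu : u ≠ r) (h : e.act i u = some ρ) :
    ρ = .R4 ∨ ρ = .R5 ∨ ρ = .R6 :=
  (hph i u ρ h).resolve_left fun hρ => hu (hρ ▸ e.guard_of_act_eq_some h).1

theorem act_root_eq_R2 (h : e.act i r = some ρ) : ρ = .R2 := by
  rcases hph i r ρ h with rfl | hρ
  · rfl
  · rcases hρ with rfl | rfl | rfl <;> exact absurd rfl (e.guard_of_act_eq_some h).1

theorem act_eq_none_of_power (hu : u ≠ r) (hc : Child G (e.conf 0) u = ∅)
    (hS : (e.conf i u).S = Power) : e.act i u = none := by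
  cases h : e.act i u with
  | none => rfl
  | some ρ =>
    have hg := e.guard_of_act_eq_some h
    rcases act_eq_R4_or_R5_or_R6 hph hu h with rfl | rfl | rfl
    · obtain ⟨p, -, -, hIdle, -⟩ := hg.2.2.1
      exact absurd (hIdle.symm.trans hS) (by decide)
    · obtain ⟨p, -, -, hIdle, -⟩ := hg.2.2.1
      exact absurd (hIdle.symm.trans hS) (by decide)
    · exact absurd (child_eq_initial hph i u ▸ hc) hg.2.2.1

theorem act_eq_none_of_act_R5 {t : ℕ} (h5 : e.act t u = some .R5) :
    ∀ j, t < j → e.act j u = none := by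
  have hg := e.guard_of_act_eq_some h5
  have hc : Child G (e.conf 0) u = ∅ := child_eq_initial hph t u ▸ hg.2.2.2.1
  have hpow : ∀ j, t < j → (e.conf j u).S = Power := by
    intro j hj
    induction j, hj using Nat.le_induction with
    | base => rw [e.conf_succ_of_act_eq_some h5]; rfl
    | succ n hn ih => rwa [e.conf_succ_of_act_eq_none (act_eq_none_of_power hph hg.1 hc ih)]
  exact fun j hj => act_eq_none_of_power hph hg.1 hc (hpow j hj)

theorem ActsInfOften.act_eq_R2_or_R4_or_R6 (hu : ActsInfOften e u) (h : e.act i u = some ρ) :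
    ρ = .R2 ∨ ρ = .R4 ∨ ρ = .R6 := by
  rcases hph i u ρ h with rfl | rfl | rfl | rfl
  · exact Or.inl rfl
  · exact Or.inr (Or.inl rfl)
  · obtain ⟨j, hij, hj⟩ := hu (i + 1)
    exact absurd (act_eq_none_of_act_R5 hph h j (by omega)) hj
  · exact Or.inr (Or.inr rfl)

theorem ActsInfOften.quietSubTree_of_act (hu : ActsInfOften e u) (h : e.act i u = some ρ) :
    QuietSubTree G (e.conf i) u ∧ Child G (e.conf 0) u ≠ ∅ := by
  have hg := e.guard_of_act_eq_some h
  rw [← child_eq_initial hph i u]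
  rcases hu.act_eq_R2_or_R4_or_R6 hph h with rfl | rfl | rfl
  · exact ⟨hg.2.2.2.elim (·.2.1) (·.2), hg.2.2.1⟩
  · obtain ⟨p, -, hq, -, -⟩ := hg.2.2.1
    exact ⟨hq, hg.2.2.2⟩
  · exact ⟨hg.2.2.2.elim (·.2.1) (·.2), hg.2.2.1⟩

theorem ActsInfOften.act_eq_R4_of_ph_ne (hu : ActsInfOften e u) (hur : u ≠ r)
    (h : (e.conf (i + 1) u).ph ≠ (e.conf i u).ph) : e.act i u = some .R4 := by
  obtain ⟨ρ, hρ, -, hne⟩ := e.exists_act_of_succ_ne (fun s => s.ph) h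
  rcases hu.act_eq_R2_or_R4_or_R6 hph hρ with rfl | rfl | rfl
  · exact absurd (e.guard_of_act_eq_some hρ).1 hur
  · exact hρ
  · exact absurd rfl hne

theorem ActsInfOften.exists_ph_change_ge (hu : ActsInfOften e u) (k : ℕ) :
    ∃ i, k ≤ i ∧ (e.conf (i + 1) u).ph ≠ (e.conf i u).ph := by
  obtain ⟨i, hki, hi⟩ := hu k
  obtain ⟨ρ, hρ⟩ := Option.ne_none_iff_exists'.1 hi
  rcases hu.act_eq_R2_or_R4_or_R6 hph hρ with rfl | rfl | rfl
  · exact ⟨i, hki, e.ph_succ_ne_of_act_R2 hρ⟩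
  · exact ⟨i, hki, e.ph_succ_ne_of_act_R4 hρ⟩
  -- after R6 the process is `Idle`, so its next act is R4
  obtain ⟨j, hij, hj, hconf⟩ := hu.exists_next_act i
  obtain ⟨ρ', hρ'⟩ := Option.ne_none_iff_exists'.1 hj
  have hidle : (e.conf j u).S = Idle := by
    rw [hconf, e.conf_succ_of_act_eq_some hρ]
    rfl
  have hg' := e.guard_of_act_eq_some hρ'
  rcases hu.act_eq_R2_or_R4_or_R6 hph hρ' with rfl | rfl | rfl
  · exact absurd hg'.1 (e.guard_of_act_eq_some hρ).1
  · exact ⟨j, by omega, e.ph_succ_ne_of_act_R4 hρ'⟩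
  · rcases status_of_end hg'.2.2.2 with h | h <;> simp [h] at hidle

theorem ActsInfOften.of_mem_child (hu : ActsInfOften e u) (hx : x ∈ Child G (e.conf 0) u) :
    ActsInfOften e x := by
  intro k
  -- the phase of `u` changes between two of its acts, and its children follow it
  obtain ⟨a, hka, ha⟩ := hu.exists_ph_change_ge hph k
  obtain ⟨ρ, hρ, -, -⟩ := e.exists_act_of_succ_ne (fun s => s.ph) ha
  obtain ⟨b, hab, hb, hphb⟩ := hu.exists_next_act a
  obtain ⟨ρ', hρ'⟩ := Option.ne_none_iff_exists'.1 hb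
  have hxa := ((hu.quietSubTree_of_act hph hρ).1 x (child_eq_initial hph a u ▸ hx)).2
  have hxb := ((hu.quietSubTree_of_act hph hρ').1 x (child_eq_initial hph b u ▸ hx)).2
  obtain ⟨s, has, -, hs⟩ := e.exists_act_of_conf_ne hab.le (u := x)
    fun h => ha (by rw [← hphb, ← hxb, h, hxa])
  exact ⟨s, by omega, hs⟩

end Phases

section CyclePath

variable {V : Type} {G : SimpleGraph V} {r : V} {e : Execution G r} {u : V} {M : Set V}

-- The paper's cycle path, recorded through the closure properties of its set of processes.
def IsCyclePath (e : Execution G r) (M : Set V) : Prop :=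
  M.Nonempty ∧ ∀ v ∈ M, ActsInfOften e v ∧
    (∃ p ∈ M, v ∈ Child G (e.conf 0) p) ∧ ∃ x ∈ M, x ∈ Child G (e.conf 0) v

theorem exists_actsInfOften [Finite V] (e : Execution G r) : ∃ u, ActsInfOften e u := by
  have h : ∃ᶠ i in atTop, ∃ u, e.act i u ≠ none := frequently_atTop.2 fun k =>
    let ⟨u, ρ, h⟩ := (e.valid k).1
    ⟨k, le_rfl, u, by simp [h]⟩
  obtain ⟨u, hu⟩ := frequently_exists.1 h
  exact ⟨u, frequently_atTop.1 hu⟩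

variable (hph : OnlyPhaseRules e)
include hph

theorem exists_isCyclePath [Finite V] : ∃ M, IsCyclePath e M := by
  classical
  obtain ⟨u₀, hu₀⟩ := exists_actsInfOften e
  have hchild : ∀ v, ∃ x, ActsInfOften e x ∧
      (ActsInfOften e v → x ∈ Child G (e.conf 0) v) := by
    intro v
    by_cases hv : ActsInfOften e v
    · obtain ⟨i, -, hi⟩ := hv 0
      obtain ⟨ρ, hρ⟩ := Option.ne_none_iff_exists'.1 hi
      obtain ⟨x, hx⟩ := Set.nonempty_iff_ne_empty.2 (hv.quietSubTree_of_act hph hρ).2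
      exact ⟨x, hv.of_mem_child hph hx, fun _ => hx⟩
    · exact ⟨u₀, hu₀, fun h => absurd h hv⟩
  choose f hfA hfC using hchild
  -- the periodic points of `f` lie in its range, where every process acts infinitely often
  have hA : ∀ v ∈ Function.periodicPts f, ActsInfOften e v := fun v hv => by
    obtain ⟨w, rfl⟩ := Function.periodicPts_subset_range hv
    exact hfA w
  have : Nonempty V := ⟨u₀⟩
  refine ⟨_, Function.exists_mem_periodicPts f, fun v hv =>
    ⟨hA v hv, ?_, f v, (Function.bijOn_periodicPts f).mapsTo hv, hfC v (hA v hv)⟩⟩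
  obtain ⟨w, hw, rfl⟩ := (Function.bijOn_periodicPts f).surjOn hv
  exact ⟨w, hw, hfC w (hA w hw)⟩

theorem S_root_eq_working {t : ℕ} (ht : e.act t r ≠ none) :
    ∀ j, t < j → (e.conf j r).S = Working :=
  e.forall_gt_of_act_ne_none (Q := fun x => x.S = Working) (fun i ρ h => by
    obtain rfl := act_root_eq_R2 hph h
    rw [e.conf_succ_of_act_eq_some h]
    rfl) ht

theorem ActsInfOften.S_idle_or_working (hu : ActsInfOften e u) {t : ℕ}
    (ht : e.act t u ≠ none) :
    ∀ j, t < j → (e.conf j u).S = Idle ∨ (e.conf j u).S = Working :=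
  e.forall_gt_of_act_ne_none (Q := fun x => x.S = Idle ∨ x.S = Working) (fun i ρ h => by
    rw [e.conf_succ_of_act_eq_some h]
    rcases hu.act_eq_R2_or_R4_or_R6 hph h with rfl | rfl | rfl <;> simp [execRule]) ht

theorem eventually_S_idle_or_working [Finite V] (hA : ∀ v ∈ M, ActsInfOften e v) :
    ∀ᶠ i in atTop, ∀ v ∈ M, (e.conf i v).S = Idle ∨ (e.conf i v).S = Working := by
  refine eventually_all.2 fun v => ?_
  by_cases hv : v ∈ M
  · obtain ⟨t, -, ht⟩ := hA v hv 0
    exact eventually_atTop.2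
      ⟨t + 1, fun j hj _ => (hA v hv).S_idle_or_working hph ht j (by omega)⟩
  · exact Eventually.of_forall fun _ h => absurd h hv

theorem IsCyclePath.root_notMem (hM : IsCyclePath e M) : r ∉ M := by
  intro hr
  obtain ⟨hrA, ⟨p, hp, hrp⟩, -⟩ := hM.2 r hr
  obtain ⟨t, -, ht⟩ := hrA 0
  obtain ⟨i, hti, hi⟩ := (hM.2 p hp).1 (t + 1)
  obtain ⟨ρ, hρ⟩ := Option.ne_none_iff_exists'.1 hi
  -- the root stays `Working` once it has acted, while its parent acts only when it is `Idle`
  have hidle :=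
    (((hM.2 p hp).1.quietSubTree_of_act hph hρ).1 r (child_eq_initial hph i p ▸ hrp)).1
  rw [S_root_eq_working hph ht i (by omega)] at hidle
  exact absurd hidle (by decide)

end CyclePath

section Descent

variable {V : Type} {G : SimpleGraph V} {r : V} {e : Execution G r} {M : Set V} {N : ℕ}
  {v : V} {a b : ℕ}

def ActsTwiceWithin (e : Execution G r) (x : V) (a b : ℕ) : Prop :=
  ∃ s s', a ≤ s ∧ s < s' ∧ s' < b ∧ e.act s x ≠ none ∧ e.act s' x ≠ none

variable (hph : OnlyPhaseRules e) (hM : IsCyclePath e M)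
  (hS : ∀ i, N ≤ i → ∀ v ∈ M, (e.conf i v).S = Idle ∨ (e.conf i v).S = Working)
include hph hM

theorem IsCyclePath.exists_actsTwiceWithin_of_act_R4 (hv : v ∈ M) (hab : a < b)
    (ha : e.act a v = some .R4) (hb : e.act b v ≠ none)
    (hmid : ∀ t, a < t → t < b → e.act t v = none) :
    ∃ x ∈ M, ActsTwiceWithin e x a b := by
  have hvb : e.conf b v = e.conf (a + 1) v :=
    e.conf_eq_of_act_eq_none hab fun t h1 h2 => hmid t (by omega) h2
  obtain ⟨ρ, hρ⟩ := Option.ne_none_iff_exists'.1 hb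
  have hvA := (hM.2 v hv).1
  obtain ⟨x, hxM, hx⟩ := (hM.2 v hv).2.2
  have hxa := (hvA.quietSubTree_of_act hph ha).1 x (child_eq_initial hph a v ▸ hx)
  have hxb := (hvA.quietSubTree_of_act hph hρ).1 x (child_eq_initial hph b v ▸ hx)
  -- R4 changed the phase of `v`, so its child `x` changed phase by R4 and became `Working` ...
  obtain ⟨s, has, hsb, hs⟩ := exists_succ_ne_of_ne (g := fun t => (e.conf t x).ph) hab.le
    (by rw [hxa.2, hxb.2, hvb]; exact e.ph_succ_ne_of_act_R4 ha)
  have h4 := (hM.2 x hxM).1.act_eq_R4_of_ph_ne hph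
    (fun h => hM.root_notMem hph (h ▸ hxM)) hs
  -- ... but it is `Idle` again at time `b`
  obtain ⟨s', hss', hs'b, hs'⟩ := e.exists_act_of_conf_ne (u := x) (show s + 1 ≤ b by omega)
    fun h => by simp [h, e.conf_succ_of_act_eq_some h4, execRule] at hxb
  exact ⟨x, hxM, s, s', has, by omega, hs'b, by simp [h4], hs'⟩

include hS in
theorem IsCyclePath.exists_actsTwiceWithin_of_act_R6 (hv : v ∈ M) (hNa : N ≤ a) (hab : a < b)
    (ha : e.act a v = some .R6) (hb : e.act b v ≠ none)
    (hmid : ∀ t, a < t → t < b → e.act t v = none) :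
    ∃ x ∈ M, ActsTwiceWithin e x a b := by
  have hvb : e.conf b v = e.conf (a + 1) v :=
    e.conf_eq_of_act_eq_none hab fun t h1 h2 => hmid t (by omega) h2
  obtain ⟨p, hpM, hvp⟩ := (hM.2 v hv).2.1
  have hP : ∀ i, (e.conf i v).P = some p := fun i => (P_eq_initial hph i v).trans hvp.2
  have hg := e.guard_of_act_eq_some ha
  have hSa : (e.conf a v).S = Working := (status_of_end hg.2.2.2).resolve_left fun h => by
    rcases hS a hNa v hv with h' | h' <;> simp [h] at h'
  obtain ⟨hpa, hpha⟩ := working_and_ph_eq_of_not_faulty hg.2.1.2.2.2.1 hg.1 (hP a)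
    (hS a hNa p hpM) hSa
  -- `v` is `Idle` at time `b`, so it executes R4 there: its parent `p` changed phase by R4 ...
  obtain ⟨ρ, hρ⟩ := Option.ne_none_iff_exists'.1 hb
  have hgb := e.guard_of_act_eq_some hρ
  have hSb : (e.conf b v).S = Idle := by
    rw [hvb, e.conf_succ_of_act_eq_some ha]
    rfl
  obtain rfl : ρ = .R4 := by
    rcases (hM.2 v hv).1.act_eq_R2_or_R4_or_R6 hph hρ with rfl | rfl | rfl
    · exact absurd hgb.1 hg.1
    · rfl
    · rcases status_of_end hgb.2.2.2 with h | h <;> simp [h] at hSb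
  obtain ⟨-, -, ⟨p', hp', -, -, hne⟩, -⟩ := hgb
  obtain rfl : p' = p := Option.some.inj (hp'.symm.trans (hP b))
  obtain ⟨s, has, hsb, hs⟩ := exists_succ_ne_of_ne (g := fun t => (e.conf t p').ph) hab.le
    fun h => hne (by rw [hvb, e.conf_succ_of_act_eq_some ha]; exact hpha.trans h.symm)
  have h4 := (hM.2 p' hpM).1.act_eq_R4_of_ph_ne hph
    (fun h => hM.root_notMem hph (h ▸ hpM)) hs
  -- ... after leaving the status `Working` it had at time `a`
  obtain ⟨-, -, ⟨-, -, -, hIdle, -⟩, -⟩ := e.guard_of_act_eq_some h4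
  obtain ⟨s', has', hs's, hs'⟩ := e.exists_act_of_conf_ne (u := p') has
    fun h => by simp [h, hpa] at hIdle
  exact ⟨p', hpM, s', s, has', hs's, hsb, hs', by simp [h4]⟩

include hS in
theorem IsCyclePath.not_actsTwiceWithin (hv : v ∈ M) (hNa : N ≤ a) :
    ¬ ActsTwiceWithin e v a b := by
  induction hd : b - a using Nat.strong_induction_on generalizing v a b with
  | _ d ih =>
  rintro ⟨s, s', has, hss', hs'b, hs, hs'⟩
  obtain ⟨t, hst, hts', ht, hmid⟩ :=
    exists_first_after (p := fun j => e.act j v ≠ none) hss' hs'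
  replace hmid := fun j h1 h2 => not_not.1 (hmid j h1 h2)
  obtain ⟨ρ, hρ⟩ := Option.ne_none_iff_exists'.1 hs
  obtain ⟨x, hx, hxst⟩ : ∃ x ∈ M, ActsTwiceWithin e x s t := by
    rcases (hM.2 v hv).1.act_eq_R2_or_R4_or_R6 hph hρ with rfl | rfl | rfl
    · exact absurd (e.guard_of_act_eq_some hρ).1 fun h => hM.root_notMem hph (h ▸ hv)
    · exact hM.exists_actsTwiceWithin_of_act_R4 hph hv hst hρ ht hmid
    · exact hM.exists_actsTwiceWithin_of_act_R6 hph hS hv (by omega) hst hρ ht hmid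
  exact ih (t - s) (by omega) hx (by omega) rfl hxst

end Descent

theorem not_onlyPhaseRules {V : Type} [Finite V] {G : SimpleGraph V} {r : V}
    (e : Execution G r) (hph : OnlyPhaseRules e) : False := by
  obtain ⟨M, hM⟩ := exists_isCyclePath hph
  obtain ⟨N, hN⟩ := eventually_atTop.1
    (eventually_S_idle_or_working hph fun v hv => (hM.2 v hv).1)
  obtain ⟨v, hv⟩ := hM.1
  obtain ⟨a, hNa, ha⟩ := (hM.2 v hv).1 N
  obtain ⟨b, hab, hb⟩ := (hM.2 v hv).1 (a + 1)
  exact hM.not_actsTwiceWithin hph hN hv le_rfl ⟨a, b, hNa, hab, lt_add_one b, ha, hb⟩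

theorem stmt13_general {V : Type} [Fintype V]
    (G : SimpleGraph V) (r : V) (hconn : G.Connected)
    (e : Execution G r) (hreg : RegularExec G r e) :
    ∀ u, ∀ k, ∃ i, k ≤ i ∧ (e.conf (i + 1) u).C ≠ (e.conf i u).C := by
  intro u k
  by_contra! hu
  have hC : ∀ᶠ i in atTop, ∀ v, (e.conf (i + 1) v).C = (e.conf i v).C := eventually_all.2
    (eventually_C_succ_eq_of_connected hreg.2 hconn (eventually_atTop.2 ⟨k, hu⟩))
  obtain ⟨N, hN⟩ := exists_onlyPhaseRules_shift hreg.2 hC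
  exact not_onlyPhaseRules (e.shift N) hN

/-- in every regular execution, every process changes its color
infinitely often. -/
theorem stmt13 {V : Type} [Fintype V] [DecidableEq V]
    (G : SimpleGraph V) (r : V) (hconn : G.Connected)
    (e : Execution G r) (hreg : RegularExec G r e) :
    ∀ u, ∀ k, ∃ i, k ≤ i ∧ (e.conf (i + 1) u).C ≠ (e.conf i u).C :=
  stmt13_general G r hconn e hreg

end BFS
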